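/- Let p > 3 be a prime with p ≡ 3 (mod 4), and let b be an integer. Then the set T = {N_p(a,b) : 1 < a < p, (a/p) = -1} has exactly two elements. -/

import Mathlib

/-- `N_p(a,b)`: number of `x` with `1 ≤ x ≤ (p-1)/2` and `{x²+b}_p > {a·x²+b}_p`. -/
def Np (p : ℕ) (a b : ℤ) : ℕ :=
  ((Finset.Icc 1 ((p - 1) / 2)).filter
    (fun x : ℕ => ((x : ℤ) ^ 2 + b) % p > (a * (x : ℤ) ^ 2 + b) % p)).card

/-!
For `u ≢ v (mod p)` one has `p · [{u}_p > {v}_p] = p + {u}_p - {v}_p - {u - v}_p`. Take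
`u = x² + b`, `v = a x² + b` with `a` a nonresidue; as `x` runs over `1, …, (p-1)/2`, `c x²` runs
once over the residues `z` with `(z/p) = (c/p)`, so
`p · N_p(a,b) = p(p-1)/2 + ∑_{(z/p)=1} {z+b}_p - ∑_{(z/p)=-1} {z+b}_p - ∑_{(z/p)=((1-a)/p)} z`.
Hence `N_p(a,b)` depends only on `((1-a)/p)`, both signs occur, and the two values differ because
the sums of the quadratic residues and of the nonresidues in `[1, p-1]` add up to `p(p-1)/2`,
which is odd for `p ≡ 3 (mod 4)`.
-/

open Finset

theorem Finset.card_image_eq_card_image_of_eq_iff {α β γ : Type*} [DecidableEq β] [DecidableEq γ]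
    {s : Finset α} {f : α → β} {g : α → γ} (h : ∀ a ∈ s, ∀ a' ∈ s, f a = f a' ↔ g a = g a') :
    #(s.image f) = #(s.image g) := by
  set t := s.image fun a => (f a, g a)
  have hfst : Set.InjOn Prod.fst (t : Set (β × γ)) := by
    rintro _ hx _ hy hxy
    obtain ⟨a, ha, rfl⟩ := mem_image.mp hx
    obtain ⟨a', ha', rfl⟩ := mem_image.mp hy
    exact Prod.ext hxy ((h a ha a' ha').1 hxy)
  have hsnd : Set.InjOn Prod.snd (t : Set (β × γ)) := by
    rintro _ hx _ hy hxy
    obtain ⟨a, ha, rfl⟩ := mem_image.mp hx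
    obtain ⟨a', ha', rfl⟩ := mem_image.mp hy
    exact Prod.ext ((h a ha a' ha').2 hxy) hxy
  calc #(s.image f) = #(t.image Prod.fst) := by rw [image_image]; rfl
    _ = #(t.image Prod.snd) := by rw [card_image_of_injOn hfst, card_image_of_injOn hsnd]
    _ = #(s.image g) := by rw [image_image]; rfl

section FiniteField

variable (F : Type*) [Field F] [Fintype F] [DecidableEq F]

def quadraticCharFiber (ε : ℤ) : Finset F := {z | quadraticChar F z = ε}

variable {F}

@[simp]
theorem mem_quadraticCharFiber {ε : ℤ} {z : F} :
    z ∈ quadraticCharFiber F ε ↔ quadraticChar F z = ε := by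
  simp [quadraticCharFiber]

theorem image_mul_quadraticCharFiber {c : F} (hc : c ≠ 0) (ε : ℤ) :
    (quadraticCharFiber F ε).image (c * ·) = quadraticCharFiber F (quadraticChar F c * ε) := by
  ext y
  simp only [mem_image, mem_quadraticCharFiber]
  constructor
  · rintro ⟨z, hz, rfl⟩
    rw [map_mul, hz]
  · intro hy
    refine ⟨c⁻¹ * y, ?_, by field_simp⟩
    rw [map_mul, hy, ← mul_assoc, ← map_mul, inv_mul_cancel₀ hc, map_one, one_mul]

theorem card_quadraticCharFiber_neg_one (hF : ringChar F ≠ 2) :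
    #(quadraticCharFiber F (-1)) = #(quadraticCharFiber F 1) := by
  obtain ⟨c, hc⟩ := quadraticChar_exists_neg_one hF
  have hc0 : c ≠ 0 := by rintro rfl; simp at hc
  rw [← card_image_of_injective _ (mul_right_injective₀ hc0), image_mul_quadraticCharFiber hc0,
    hc, neg_one_mul, neg_neg]

theorem exists_quadraticChar_eq_neg_one_and_one_sub_eq_neg_one (hF : ringChar F ≠ 2) :
    ∃ a : F, quadraticChar F a = -1 ∧ quadraticChar F (1 - a) = -1 := by
  by_contra! h
  -- otherwise `a ↦ 1 - a` would map the nonsquares onto the nonzero squares, `1 = 1 - 0` included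
  have hsub : (quadraticCharFiber F (-1)).image (1 - ·) ⊆ quadraticCharFiber F 1 := by
    simp only [subset_iff, mem_image, mem_quadraticCharFiber]
    rintro _ ⟨a, ha, rfl⟩
    have ha1 : 1 - a ≠ 0 := by
      rintro h0
      rw [← sub_eq_zero.mp h0, map_one] at ha
      norm_num at ha
    exact (quadraticChar_dichotomy ha1).resolve_right (h a ha)
  have himage := eq_of_subset_of_card_le hsub (by
    rw [card_image_of_injective _ sub_right_injective, card_quadraticCharFiber_neg_one hF])
  obtain ⟨a, ha, h1a⟩ := mem_image.mp (himage ▸ mem_quadraticCharFiber.mpr (map_one _))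
  rw [sub_eq_self.mp h1a, mem_quadraticCharFiber, quadraticChar_zero] at ha
  norm_num at ha

theorem exists_quadraticChar_eq_neg_one_and_one_sub_eq_one
    (hF : quadraticChar F (-1) = -1) (h3 : (3 : F) ≠ 0) :
    ∃ a : F, quadraticChar F a = -1 ∧ quadraticChar F (1 - a) = 1 := by
  -- one of `-1`, `-3`, `3` works, depending on the characters of `2` and `3`
  have h2 : (2 : F) ≠ 0 := fun h => by
    rw [show (-1 : F) = 1 by linear_combination -h, map_one] at hF
    norm_num at hF
  rcases quadraticChar_dichotomy h2 with χ2 | χ2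
  · exact ⟨-1, hF, by norm_num [χ2]⟩
  rcases quadraticChar_dichotomy h3 with χ3 | χ3
  · refine ⟨-3, by rw [neg_eq_neg_one_mul, map_mul, hF, χ3]; norm_num, ?_⟩
    rw [show (1 : F) - -3 = 2 * 2 by norm_num, map_mul, χ2]
    norm_num
  · refine ⟨3, χ3, ?_⟩
    rw [show (1 : F) - 3 = -1 * 2 by norm_num, map_mul, hF, χ2]
    norm_num

theorem quadraticChar_one_sub_dichotomy {a : F} (ha : quadraticChar F a = -1) :
    quadraticChar F (1 - a) = 1 ∨ quadraticChar F (1 - a) = -1 := by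
  refine quadraticChar_dichotomy (sub_ne_zero.mpr fun h => ?_)
  rw [← h, map_one] at ha
  norm_num at ha

end FiniteField

theorem Int.ite_emod_lt_emod_eq {n : ℤ} (hn : 0 < n) {u v : ℤ} (h : ¬ n ∣ u - v) :
    (if u % n > v % n then n else 0) = n + u % n - v % n - (u - v) % n := by
  have hu := Int.emod_nonneg u hn.ne'
  have hu' := Int.emod_lt_of_pos u hn
  have hv := Int.emod_nonneg v hn.ne'
  have hv' := Int.emod_lt_of_pos v hn
  have hne : u % n ≠ v % n := fun e => h (Int.ModEq.dvd e.symm)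
  rw [Int.sub_emod u v n]
  split_ifs
  · rw [Int.emod_eq_of_lt (a := u % n - v % n) (by omega) (by omega)]
    ring
  · rw [← Int.add_emod_right (u % n - v % n), Int.emod_eq_of_lt (a := u % n - v % n + n) (by omega)
      (by omega)]
    ring

section ZModPrime

variable {p : ℕ} [Fact p.Prime]

theorem natCast_ne_zero_of_mem_Icc_half {x : ℕ} (hx : x ∈ Icc 1 ((p - 1) / 2)) :
    (x : ZMod p) ≠ 0 := by
  rw [mem_Icc] at hx
  rw [Ne, ZMod.natCast_eq_zero_iff]
  intro hdvd
  have := Nat.le_of_dvd (by omega) hdvd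
  omega

theorem sq_injOn_Icc_half (hp : p ≠ 2) :
    Set.InjOn (fun x : ℕ => (x : ZMod p) ^ 2) (Icc 1 ((p - 1) / 2) : Set ℕ) := by
  have hodd : p % 2 = 1 := Nat.odd_iff.mp ((Fact.out : p.Prime).odd_of_ne_two hp)
  intro x hx y hy hxy
  simp only [coe_Icc, Set.mem_Icc] at hx hy
  rcases sq_eq_sq_iff_eq_or_eq_neg.mp hxy with h | h
  · have := (ZMod.natCast_eq_natCast_iff' x y p).mp h
    rwa [Nat.mod_eq_of_lt (by omega), Nat.mod_eq_of_lt (by omega)] at this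
  · have hsum : ((x + y : ℕ) : ZMod p) = 0 := by
      push_cast
      rw [h, neg_add_cancel]
    have := Nat.le_of_dvd (by omega) ((ZMod.natCast_eq_zero_iff _ _).mp hsum)
    omega

theorem image_sq_Icc_half (hp : p ≠ 2) :
    (Icc 1 ((p - 1) / 2)).image (fun x : ℕ => (x : ZMod p) ^ 2) =
      quadraticCharFiber (ZMod p) 1 := by
  have hodd : p % 2 = 1 := Nat.odd_iff.mp ((Fact.out : p.Prime).odd_of_ne_two hp)
  ext y
  simp only [mem_image, mem_quadraticCharFiber]
  constructor
  · rintro ⟨x, hx, rfl⟩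
    exact quadraticChar_sq_one' (natCast_ne_zero_of_mem_Icc_half hx)
  · intro hy
    have hy0 : y ≠ 0 := by
      rintro rfl
      simp at hy
    obtain ⟨w, rfl⟩ := (quadraticChar_one_iff_isSquare hy0).mp hy
    have hw0 : w.valMinAbs ≠ 0 := by
      rw [Ne, ZMod.valMinAbs_eq_zero]
      rintro rfl
      simp at hy0
    refine ⟨w.valMinAbs.natAbs, mem_Icc.mpr ⟨Int.natAbs_pos.mpr hw0, ?_⟩, ?_⟩
    · exact (ZMod.natAbs_valMinAbs_le w).trans (by omega)
    · rw [ZMod.natCast_natAbs_valMinAbs]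
      split_ifs <;> ring

theorem sum_Icc_half_mul_sq {M : Type*} [AddCommMonoid M] (hp : p ≠ 2) {c : ZMod p} (hc : c ≠ 0)
    (f : ZMod p → M) :
    ∑ x ∈ Icc 1 ((p - 1) / 2), f (c * (x : ZMod p) ^ 2) =
      ∑ z ∈ quadraticCharFiber (ZMod p) (quadraticChar (ZMod p) c), f z := by
  rw [← mul_one (quadraticChar (ZMod p) c), ← image_mul_quadraticCharFiber hc,
    ← image_sq_Icc_half hp, image_image, sum_image]
  · rfl
  · intro x hx y hy h
    exact sq_injOn_Icc_half hp hx hy (mul_left_cancel₀ hc h)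

theorem Np_mul_eq (a b : ℤ) (ha : (a : ZMod p) ≠ 1) :
    (Np p a b : ℤ) * p = ∑ x ∈ Icc 1 ((p - 1) / 2),
      ((p : ℤ) + ((x : ℤ) ^ 2 + b) % p - (a * (x : ℤ) ^ 2 + b) % p
        - ((1 - a) * (x : ℤ) ^ 2) % p) := by
  rw [Np, natCast_card_filter, sum_mul]
  refine sum_congr rfl fun x hx => ?_
  have hdiff : (x : ℤ) ^ 2 + b - (a * (x : ℤ) ^ 2 + b) = (1 - a) * (x : ℤ) ^ 2 := by ring
  have hndvd : ¬ (p : ℤ) ∣ (1 - a) * (x : ℤ) ^ 2 := by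
    rw [← ZMod.intCast_zmod_eq_zero_iff_dvd]
    push_cast
    exact mul_ne_zero (sub_ne_zero.mpr (Ne.symm ha))
      (pow_ne_zero 2 (natCast_ne_zero_of_mem_Icc_half hx))
  rw [ite_mul, one_mul, zero_mul,
    Int.ite_emod_lt_emod_eq (by exact_mod_cast (Fact.out : p.Prime).pos) (hdiff ▸ hndvd), hdiff]

variable (p) in
def shiftedResidueSum (ε b : ℤ) : ℤ :=
  ∑ z ∈ quadraticCharFiber (ZMod p) ε, ((z.val : ℤ) + b) % p

theorem sum_Icc_half_emod (hp : p ≠ 2) {c : ℤ} (hc : (c : ZMod p) ≠ 0) (b : ℤ) :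
    ∑ x ∈ Icc 1 ((p - 1) / 2), (c * (x : ℤ) ^ 2 + b) % p =
      shiftedResidueSum p (quadraticChar (ZMod p) c) b := by
  rw [shiftedResidueSum, ← sum_Icc_half_mul_sq hp hc]
  refine sum_congr rfl fun x _ => ?_
  have hcast : (c : ZMod p) * (x : ZMod p) ^ 2 = ((c * (x : ℤ) ^ 2 : ℤ) : ZMod p) := by
    push_cast
    rfl
  rw [hcast, ZMod.val_intCast, Int.emod_add_emod]

theorem Np_mul_eq_of_legendreSym_eq_neg_one (hp : p ≠ 2) {a : ℤ} (ha : legendreSym p a = -1)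
    (b : ℤ) :
    (Np p a b : ℤ) * p = p * ((p - 1) / 2 : ℕ) + shiftedResidueSum p 1 b
      - shiftedResidueSum p (-1) b - shiftedResidueSum p (quadraticChar (ZMod p) (1 - a)) 0 := by
  have ha0 : (a : ZMod p) ≠ 0 := fun h => by simp [legendreSym, h] at ha
  have ha1 : (a : ZMod p) ≠ 1 := fun h => by simp [legendreSym, h] at ha
  have h1 := sum_Icc_half_emod hp (c := 1) (by simp) b
  have h2 := sum_Icc_half_emod hp ha0 b
  have h3 := sum_Icc_half_emod hp (c := 1 - a) (by push_cast; exact sub_ne_zero.mpr (Ne.symm ha1)) 0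
  simp only [one_mul, add_zero, Int.cast_one, map_one] at h1 h3
  push_cast at h3
  rw [Np_mul_eq a b ha1, sum_sub_distrib, sum_sub_distrib, sum_add_distrib, sum_const, Nat.card_Icc,
    add_tsub_cancel_right, nsmul_eq_mul, h1, h2, h3, ← legendreSym, ha]
  ring

theorem sum_val_mul_two : (∑ z : ZMod p, (z.val : ℤ)) * 2 = p * (p - 1) := by
  obtain ⟨n, rfl⟩ := Nat.exists_eq_add_one_of_ne_zero (Fact.out : p.Prime).ne_zero
  have hrange : ∑ z : ZMod (n + 1), (z.val : ℤ) = ∑ i ∈ range (n + 1), (i : ℤ) :=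
    Fin.sum_univ_eq_sum_range (fun i => (i : ℤ)) (n + 1)
  have hnat := sum_range_id_mul_two (n + 1)
  rw [Nat.add_sub_cancel] at hnat
  rw [hrange, ← Nat.cast_sum, Nat.cast_add_one, add_sub_cancel_right]
  exact_mod_cast hnat

theorem shiftedResidueSum_zero (ε : ℤ) :
    shiftedResidueSum p ε 0 = ∑ z ∈ quadraticCharFiber (ZMod p) ε, (z.val : ℤ) := by
  refine sum_congr rfl fun z _ => ?_
  rw [add_zero, Int.emod_eq_of_lt (by positivity) (by exact_mod_cast z.val_lt)]

theorem shiftedResidueSum_one_add_neg_one_mul_two :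
    (shiftedResidueSum p 1 0 + shiftedResidueSum p (-1) 0) * 2 = p * (p - 1) := by
  have hmaps : ∀ z ∈ (univ : Finset (ZMod p)), quadraticChar (ZMod p) z ∈ ({0, 1, -1} : Finset ℤ) :=
    fun z _ => by simpa using quadraticChar_isQuadratic (ZMod p) z
  have hzero : ∑ z ∈ quadraticCharFiber (ZMod p) 0, (z.val : ℤ) = 0 :=
    sum_eq_zero fun z hz => by
      rw [mem_quadraticCharFiber, quadraticChar_eq_zero_iff] at hz
      simp [hz]
  rw [← sum_val_mul_two, ← sum_fiberwise_of_maps_to hmaps, sum_insert (by norm_num),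
    sum_pair (by norm_num), shiftedResidueSum_zero, shiftedResidueSum_zero]
  unfold quadraticCharFiber at hzero ⊢
  rw [hzero, zero_add]

theorem shiftedResidueSum_one_ne_neg_one (hp4 : p % 4 = 3) :
    shiftedResidueSum p 1 0 ≠ shiftedResidueSum p (-1) 0 := by
  intro h
  have hsum := shiftedResidueSum_one_add_neg_one_mul_two (p := p)
  have hmod : (p : ℤ) * (p - 1) % 4 = 2 := by
    have : (p : ℤ) % 4 = 3 := by exact_mod_cast hp4
    rw [Int.mul_emod, Int.sub_emod, this]
    norm_num
  omega

theorem Np_eq_Np_iff (hp4 : p % 4 = 3) {a a' : ℤ} (ha : legendreSym p a = -1)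
    (ha' : legendreSym p a' = -1) (b : ℤ) :
    Np p a b = Np p a' b ↔
      quadraticChar (ZMod p) (1 - a) = quadraticChar (ZMod p) (1 - a') := by
  have hp : p ≠ 2 := by omega
  have hp0 : (p : ℤ) ≠ 0 := by exact_mod_cast (Fact.out : p.Prime).ne_zero
  have hsum : Np p a b = Np p a' b ↔ shiftedResidueSum p (quadraticChar (ZMod p) (1 - a)) 0 =
      shiftedResidueSum p (quadraticChar (ZMod p) (1 - a')) 0 := by
    rw [← Nat.cast_inj (R := ℤ), ← mul_left_inj' hp0, Np_mul_eq_of_legendreSym_eq_neg_one hp ha,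
      Np_mul_eq_of_legendreSym_eq_neg_one hp ha']
    constructor <;> intro h <;> linarith
  have hne := shiftedResidueSum_one_ne_neg_one hp4
  rw [hsum]
  rcases quadraticChar_one_sub_dichotomy ha with h | h <;>
    rcases quadraticChar_one_sub_dichotomy ha' with h' | h' <;>
    simp [h, h', hne, hne.symm]

theorem image_quadraticChar_one_sub (hp4 : p % 4 = 3) (hp3 : 3 < p) :
    ((Ioo (1 : ℤ) p).filter fun a => legendreSym p a = -1).image
      (fun a : ℤ => quadraticChar (ZMod p) (1 - a)) = {1, -1} := by
  ext ε
  simp only [mem_image, mem_filter, mem_Ioo, mem_insert, mem_singleton]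
  constructor
  · rintro ⟨a, ⟨_, ha⟩, rfl⟩
    exact quadraticChar_one_sub_dichotomy ha
  · intro hε
    obtain ⟨a, ha, h1a⟩ : ∃ a : ZMod p,
        quadraticChar (ZMod p) a = -1 ∧ quadraticChar (ZMod p) (1 - a) = ε := by
      rcases hε with rfl | rfl
      · refine exists_quadraticChar_eq_neg_one_and_one_sub_eq_one ?_ ?_
        · exact quadraticChar_neg_one_iff_not_isSquare.mpr
            (by rw [ZMod.exists_sq_eq_neg_one_iff]; omega)
        · have : ((3 : ℕ) : ZMod p) ≠ 0 := by
            rw [Ne, ZMod.natCast_eq_zero_iff]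
            intro hdvd
            have := Nat.le_of_dvd (by norm_num) hdvd
            omega
          exact_mod_cast this
      · exact exists_quadraticChar_eq_neg_one_and_one_sub_eq_neg_one
          (by rw [ZMod.ringChar_zmod_n]; omega)
    have hval0 : a.val ≠ 0 := (ZMod.val_ne_zero a).mpr fun h => by simp [h] at ha
    have hval1 : a.val ≠ 1 := fun h => by
      rw [← ZMod.natCast_zmod_val a, h, Nat.cast_one, map_one] at ha
      norm_num at ha
    refine ⟨a.val, ⟨⟨by omega, by exact_mod_cast a.val_lt⟩, ?_⟩, ?_⟩ <;>
      simpa only [legendreSym, Int.cast_natCast, ZMod.natCast_zmod_val]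

end ZModPrime

theorem stmt_15 (p : ℕ) [Fact p.Prime] (hp4 : p % 4 = 3) (hp3 : 3 < p) (b : ℤ) :
    (((Finset.Ioo (1 : ℤ) (p : ℤ)).filter (fun a => legendreSym p a = -1)).image
      (fun a => Np p a b)).card = 2 := by
  rw [card_image_eq_card_image_of_eq_iff (g := fun a : ℤ => quadraticChar (ZMod p) (1 - a))
    fun a ha a' ha' => Np_eq_Np_iff hp4 (mem_filter.mp ha).2 (mem_filter.mp ha').2 b,
    image_quadraticChar_one_sub hp4 hp3]
  rfl
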